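/- arXiv:1212.3561 — 3 statements merged into one kernel-verified Lean document; each statement's English description precedes it below -/
import Mathlib

section
/- Let u₁, u₂ : ℝ² → ℝ be smooth, e² , τ > 0, and let Ω : ℝ² → ℝ be positive smooth (a conformal factor for the background metric, with area form Ω dx∧dy). Suppose (1/2)Δu₁ = e²(e^{u₁} − τ)Ω (the vortex equation for u₁ on background Ω), and (1/2)Δu₂ = e²(e^{u₂} − τ)·(τ⁻¹ e^{u₁} Ω) (the vortex equation for u₂ on the deformed background τ⁻¹ e^{u₁} Ω). Then u := u₁ + u₂ − log τ satisfies (1/2)Δu = e²(e^{u} − τ)Ω, i.e. the superposed field solves the vortex equation on the original background. -/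
noncomputable def pdx (u : ℂ → ℝ) (z : ℂ) : ℝ := deriv (fun t : ℝ => u (z + (t : ℂ))) 0

noncomputable def pdy (u : ℂ → ℝ) (z : ℂ) : ℝ := deriv (fun t : ℝ => u (z + (t : ℂ) * Complex.I)) 0

/-- Standard Laplacian on ℝ² ≅ ℂ. -/
noncomputable def lap (u : ℂ → ℝ) (z : ℂ) : ℝ := pdx (pdx u) z + pdy (pdy u) z

lemma pdx_eq (u : ℂ → ℝ) (hu : Differentiable ℝ u) (z : ℂ) :
    pdx u z = fderiv ℝ u z 1 := by
  have hA : HasDerivAt (fun t : ℝ => z + (t : ℂ)) 1 0 := by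
    simpa using (Complex.ofRealCLM.hasDerivAt (x := (0 : ℝ))).const_add z
  have h := (hu (z + ((0 : ℝ) : ℂ))).hasFDerivAt.comp_hasDerivAt 0 hA
  simpa [pdx, Function.comp_def] using h.deriv

lemma pdy_eq (u : ℂ → ℝ) (hu : Differentiable ℝ u) (z : ℂ) :
    pdy u z = fderiv ℝ u z Complex.I := by
  have hA : HasDerivAt (fun t : ℝ => z + (t : ℂ) * Complex.I) Complex.I 0 := by
    simpa using ((Complex.ofRealCLM.hasDerivAt (x := (0 : ℝ))).mul_const Complex.I).const_add z
  have h := (hu (z + ((0 : ℝ) : ℂ) * Complex.I)).hasFDerivAt.comp_hasDerivAt 0 hA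
  simpa [pdy, Function.comp_def] using h.deriv

lemma contDiff_pdx (u : ℂ → ℝ) (hu : ContDiff ℝ (⊤ : ℕ∞) u) : ContDiff ℝ (⊤ : ℕ∞) (pdx u) := by
  have : pdx u = fun z => fderiv ℝ u z 1 := funext (pdx_eq u (hu.differentiable (by simp)))
  rw [this]
  exact (hu.fderiv_right (by simp)).clm_apply contDiff_const

lemma contDiff_pdy (u : ℂ → ℝ) (hu : ContDiff ℝ (⊤ : ℕ∞) u) : ContDiff ℝ (⊤ : ℕ∞) (pdy u) := by
  have : pdy u = fun z => fderiv ℝ u z Complex.I := funext (pdy_eq u (hu.differentiable (by simp)))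
  rw [this]
  exact (hu.fderiv_right (by simp)).clm_apply contDiff_const

lemma pdx_add (f g : ℂ → ℝ) (hf : Differentiable ℝ f) (hg : Differentiable ℝ g) (z : ℂ) :
    pdx (fun w => f w + g w) z = pdx f z + pdx g z := by
  rw [pdx_eq (fun w => f w + g w) (hf.add hg), pdx_eq _ hf, pdx_eq _ hg, fderiv_fun_add (hf z) (hg z)]
  simp

lemma pdy_add (f g : ℂ → ℝ) (hf : Differentiable ℝ f) (hg : Differentiable ℝ g) (z : ℂ) :
    pdy (fun w => f w + g w) z = pdy f z + pdy g z := by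
  rw [pdy_eq (fun w => f w + g w) (hf.add hg), pdy_eq _ hf, pdy_eq _ hg, fderiv_fun_add (hf z) (hg z)]
  simp

lemma pdx_sub_const (f : ℂ → ℝ) (c : ℝ) (z : ℂ) :
    pdx (fun w => f w - c) z = pdx f z := by
  unfold pdx
  exact deriv_sub_const c

lemma pdy_sub_const (f : ℂ → ℝ) (c : ℝ) (z : ℂ) :
    pdy (fun w => f w - c) z = pdy f z := by
  unfold pdy
  exact deriv_sub_const c

lemma lap_add_sub_const (u v : ℂ → ℝ) (hu : ContDiff ℝ (⊤ : ℕ∞) u) (hv : ContDiff ℝ (⊤ : ℕ∞) v) (c : ℝ)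
    (z : ℂ) : lap (fun w => u w + v w - c) z = lap u z + lap v z := by
  have hud := hu.differentiable (by simp)
  have hvd := hv.differentiable (by simp)
  have hpx : pdx (fun w => u w + v w - c) = fun w => pdx u w + pdx v w := by
    funext w
    rw [pdx_sub_const (fun w => u w + v w) c w, pdx_add u v hud hvd w]
  have hpy : pdy (fun w => u w + v w - c) = fun w => pdy u w + pdy v w := by
    funext w
    rw [pdy_sub_const (fun w => u w + v w) c w, pdy_add u v hud hvd w]
  unfold lap
  rw [hpx, hpy, pdx_add _ _ ((contDiff_pdx u hu).differentiable (by simp))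
      ((contDiff_pdx v hv).differentiable (by simp)),
    pdy_add _ _ ((contDiff_pdy u hu).differentiable (by simp))
      ((contDiff_pdy v hv).differentiable (by simp))]
  ring

/-- Superposition rule for abelian vortices: if u₁ solves the vortex equation on the
background Ω and u₂ solves it on the deformed background τ⁻¹ e^{u₁} Ω, then
u = u₁ + u₂ - log τ solves the vortex equation on the original background Ω. -/
theorem stmt2 (u₁ u₂ : ℂ → ℝ) (hu₁ : ContDiff ℝ (⊤ : ℕ∞) u₁) (hu₂ : ContDiff ℝ (⊤ : ℕ∞) u₂)
    (e2 τ : ℝ) (he : 0 < e2) (hτ : 0 < τ)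
    (Ω : ℂ → ℝ) (hΩs : ContDiff ℝ (⊤ : ℕ∞) Ω) (hΩ : ∀ z, 0 < Ω z)
    (h1 : ∀ z, (1 / 2) * lap u₁ z = e2 * (Real.exp (u₁ z) - τ) * Ω z)
    (h2 : ∀ z, (1 / 2) * lap u₂ z
        = e2 * (Real.exp (u₂ z) - τ) * (τ⁻¹ * Real.exp (u₁ z) * Ω z)) :
    ∀ z, (1 / 2) * lap (fun w => u₁ w + u₂ w - Real.log τ) z
        = e2 * (Real.exp (u₁ z + u₂ z - Real.log τ) - τ) * Ω z := by
  intro z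
  rw [lap_add_sub_const u₁ u₂ hu₁ hu₂ (Real.log τ) z]
  have : (1 / 2 : ℝ) * (lap u₁ z + lap u₂ z)
      = (1 / 2) * lap u₁ z + (1 / 2) * lap u₂ z := by ring
  rw [this, h1 z, h2 z, sub_eq_add_neg (u₁ z + u₂ z), Real.exp_add, Real.exp_add,
    Real.exp_neg, Real.exp_log hτ]
  field_simp
  ring
end

section
/- Let n ≥ 1 be an integer and f : ℂ → ℝ a smooth positive function. Define g(z) = |z|^{2n} f(z) (so √g vanishes at 0 like |z|^n). Then the function |∇√g|² , defined on ℂ \ {0}, extends to a smooth function on all of ℂ. -/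
/-- If g(z) = |z|^{2n} f(z) with f smooth and positive and n ≥ 1, then |∇√g|²,
defined on ℂ \ {0}, extends to a smooth function on all of ℂ. -/
theorem stmt6 (n : ℕ) (hn : 1 ≤ n) (f : ℂ → ℝ) (hf : ContDiff ℝ (⊤ : ℕ∞) f)
    (hfpos : ∀ z, 0 < f z)
    (g : ℂ → ℝ) (hg : ∀ z, g z = ‖z‖ ^ (2 * n) * f z) :
    ∃ F : ℂ → ℝ, ContDiff ℝ (⊤ : ℕ∞) F ∧ ∀ z : ℂ, z ≠ 0 →
      F z = (pdx (fun w => Real.sqrt (g w)) z) ^ 2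
          + (pdy (fun w => Real.sqrt (g w)) z) ^ 2 := by
  obtain ⟨m, rfl⟩ : ∃ m, n = m + 1 := ⟨n - 1, (Nat.succ_pred_eq_of_pos hn).symm⟩
  set n := m + 1 with hndef
  -- directional derivatives of f
  set P : ℂ → ℝ := fun z => fderiv ℝ f z 1 with hP
  set Q : ℂ → ℝ := fun z => fderiv ℝ f z Complex.I with hQ
  set N : ℂ → ℝ := fun z => Complex.normSq z with hNdef
  have hfd : Differentiable ℝ f := hf.differentiable (by simp)
  have hPc : ContDiff ℝ (⊤ : ℕ∞) P := (hf.fderiv_right (le_refl _)).clm_apply contDiff_const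
  have hQc : ContDiff ℝ (⊤ : ℕ∞) Q := (hf.fderiv_right (le_refl _)).clm_apply contDiff_const
  have hre : ContDiff ℝ (⊤ : ℕ∞) (fun z : ℂ => z.re) := Complex.reCLM.contDiff
  have him : ContDiff ℝ (⊤ : ℕ∞) (fun z : ℂ => z.im) := Complex.imCLM.contDiff
  have hNc : ContDiff ℝ (⊤ : ℕ∞) N := by
    have : N = fun z : ℂ => z.re * z.re + z.im * z.im := by
      funext z; simp [hNdef, Complex.normSq_apply]
    rw [this]; exact (hre.mul hre).add (him.mul him)
  refine ⟨fun z => N z ^ m * (4 * (n:ℝ)^2 * f z ^ 2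
      + 4 * n * f z * (z.re * P z + z.im * Q z)
      + N z * (P z ^ 2 + Q z ^ 2)) / (4 * f z), ?_, ?_⟩
  · apply ContDiff.div
    · exact ((hNc.pow m).mul ((((contDiff_const.mul (hf.pow 2)).add
        ((contDiff_const.mul hf).mul ((hre.mul hPc).add (him.mul hQc)))).add
        (hNc.mul ((hPc.pow 2).add (hQc.pow 2))))))
    · exact contDiff_const.mul hf
    · intro z; have := hfpos z; positivity
  · intro z hz
    have hNz : (0:ℝ) < N z := by
      simpa [hNdef] using Complex.normSq_pos.mpr hz
    have hgN : ∀ w, g w = N w ^ n * f w := by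
      intro w
      rw [hg w, hNdef, pow_mul, Complex.sq_norm]
    have hgz : 0 < g z := by
      rw [hgN]; have := hfpos z; positivity
    have hSz : (0:ℝ) < Real.sqrt (g z) := Real.sqrt_pos.mpr hgz
    -- derivative along x-direction
    have lineX : HasDerivAt (fun t : ℝ => z + (t:ℂ)) 1 0 := by
      simpa using (Complex.ofRealCLM.hasDerivAt (x := (0:ℝ))).const_add z
    have lineY : HasDerivAt (fun t : ℝ => z + (t:ℂ) * Complex.I) Complex.I 0 := by
      have : HasDerivAt (fun t : ℝ => (t:ℂ)) 1 0 := by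
        simpa using (hasDerivAt_id (0:ℝ)).ofReal_comp
      simpa using (this.mul_const Complex.I).const_add z
    have hfX : HasDerivAt (fun t : ℝ => f (z + (t:ℂ))) (P z) 0 := by
      have := (hfd _).hasFDerivAt.comp_hasDerivAt 0 lineX
      simp only [Function.comp_def, Complex.ofReal_zero, add_zero] at this; exact this
    have hfY : HasDerivAt (fun t : ℝ => f (z + (t:ℂ) * Complex.I)) (Q z) 0 := by
      have := (hfd _).hasFDerivAt.comp_hasDerivAt 0 lineY
      simp only [Function.comp_def, Complex.ofReal_zero, zero_mul, add_zero] at this; exact this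
    have hNX : HasDerivAt (fun t : ℝ => N (z + (t:ℂ))) (2 * z.re) 0 := by
      have : (fun t : ℝ => N (z + (t:ℂ))) = fun t : ℝ => (z.re + t)^2 + z.im^2 := by
        funext t; simp [hNdef, Complex.normSq_apply]; ring
      rw [this]
      have h1 := (((hasDerivAt_id (0:ℝ)).const_add z.re).pow 2).add_const (z.im ^ 2)
      simpa using h1
    have hNY : HasDerivAt (fun t : ℝ => N (z + (t:ℂ) * Complex.I)) (2 * z.im) 0 := by
      have : (fun t : ℝ => N (z + (t:ℂ) * Complex.I)) = fun t : ℝ => z.re^2 + (z.im + t)^2 := by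
        funext t; simp [hNdef, Complex.normSq_apply]; ring
      rw [this]
      have h1 := (((hasDerivAt_id (0:ℝ)).const_add z.im).pow 2).const_add (z.re ^ 2)
      simpa using h1
    -- derivative of g along lines
    set Ax : ℝ := (n:ℝ) * N z ^ (n-1) * (2 * z.re) * f z + N z ^ n * P z with hAx
    set Ay : ℝ := (n:ℝ) * N z ^ (n-1) * (2 * z.im) * f z + N z ^ n * Q z with hAy
    have hgX : HasDerivAt (fun t : ℝ => g (z + (t:ℂ))) Ax 0 := by
      have h := ((hNX.fun_pow n).fun_mul hfX)
      have he : (fun t : ℝ => N (z + (t:ℂ)) ^ n * f (z + (t:ℂ)))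
          = fun t : ℝ => g (z + (t:ℂ)) := by funext t; rw [hgN]
      rw [he] at h
      simp only [Complex.ofReal_zero, add_zero] at h
      exact h
    have hgY : HasDerivAt (fun t : ℝ => g (z + (t:ℂ) * Complex.I)) Ay 0 := by
      have h := ((hNY.fun_pow n).fun_mul hfY)
      have he : (fun t : ℝ => N (z + (t:ℂ) * Complex.I) ^ n * f (z + (t:ℂ) * Complex.I))
          = fun t : ℝ => g (z + (t:ℂ) * Complex.I) := by funext t; rw [hgN]
      rw [he] at h
      simp only [Complex.ofReal_zero, zero_mul, add_zero] at h
      exact h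
    -- sqrt composition
    have hsqX : HasDerivAt Real.sqrt (1 / (2 * Real.sqrt (g z))) (g (z + ((0:ℝ):ℂ))) := by
      simpa using Real.hasDerivAt_sqrt hgz.ne'
    have hsqY : HasDerivAt Real.sqrt (1 / (2 * Real.sqrt (g z))) (g (z + ((0:ℝ):ℂ) * Complex.I)) := by
      simpa using Real.hasDerivAt_sqrt hgz.ne'
    have hpdx : pdx (fun w => Real.sqrt (g w)) z = 1 / (2 * Real.sqrt (g z)) * Ax := by
      have h : HasDerivAt (fun t : ℝ => Real.sqrt (g (z + (t:ℂ))))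
          (1 / (2 * Real.sqrt (g z)) * Ax) 0 := hsqX.comp 0 hgX
      simpa [pdx] using h.deriv
    have hpdy : pdy (fun w => Real.sqrt (g w)) z = 1 / (2 * Real.sqrt (g z)) * Ay := by
      have h : HasDerivAt (fun t : ℝ => Real.sqrt (g (z + (t:ℂ) * Complex.I)))
          (1 / (2 * Real.sqrt (g z)) * Ay) 0 := hsqY.comp 0 hgY
      simpa [pdy] using h.deriv
    rw [hpdx, hpdy]
    have hS2 : Real.sqrt (g z) ^ 2 = g z := Real.sq_sqrt hgz.le
    have hfz := hfpos z
    have hxy : z.re * z.re + z.im * z.im = N z := by simp [hNdef, Complex.normSq_apply]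
    have hn1 : n - 1 = m := by simp [hndef]
    rw [hAx, hAy, hn1]
    field_simp
    rw [hS2, hgN z]
    simp only [hndef, hNdef, Complex.normSq_apply]
    push_cast
    ring
end

section
/- Let M be a compact Riemann surface with Kähler form ω, and suppose ω' = ρ ω with ρ : M → ℝ smooth, 0 ≤ ρ, and ρ vanishing only at finitely many points q₁,…,q_k with positive multiplicities n₁,…,n_k, each local model ρ = |z|^{2n_j}·(positive smooth). If i F_{ω'} + e²τ ω' = i F_ω + e²τ ω holds on M \ {q_j} with e², τ > 0, then Vol(M, ω') = Vol(M, ω) − (2π/(e²τ)) Σ_j n_j. In particular 2π Σ_j n_j < e²τ · Vol(M, ω). -/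
/-!
With `μ` the volume measure of `ω`, the functions `K` and `K'` stand for the curvature densities
`i F_ω / ω` and `i F_{ω'} / ω`, and `ρ = ω' / ω`. Integrating the curvature equation against `μ`,
the two Gauss–Bonnet integrals differ by `2π Σ nⱼ`, which must therefore equal
`e²τ (Vol(M, ω) - Vol(M, ω'))`. The strict inequality is `Vol(M, ω') > 0`, as `ρ > 0` off the
null set `{qⱼ}`.
-/

open MeasureTheory

namespace MeasureTheory

variable {α : Type*} [MeasurableSpace α] {μ : Measure α}

theorem integral_pos_of_ae_pos [NeZero μ] {f : α → ℝ} (hf : Integrable f μ)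
    (hpos : ∀ᵐ x ∂μ, 0 < f x) : 0 < ∫ x, f x ∂μ := by
  rw [integral_pos_iff_support_of_nonneg_ae (hpos.mono fun _ hx => hx.le) hf, pos_iff_ne_zero]
  intro hsupp
  obtain ⟨x, hx0, hxpos⟩ := ((measure_eq_zero_iff_ae_notMem.1 hsupp).and hpos).exists
  exact hx0 (Function.mem_support.2 hxpos.ne')

theorem integral_eq_measureReal_univ_sub_of_ae_add_mul_eq [IsFiniteMeasure μ]
    {K K' ρ : α → ℝ} {c : ℝ} (hc : c ≠ 0)
    (hK : Integrable K μ) (hK' : Integrable K' μ) (hρ : Integrable ρ μ)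
    (h : ∀ᵐ x ∂μ, K' x + c * ρ x = K x + c) :
    ∫ x, ρ x ∂μ = μ.real Set.univ - ((∫ x, K' x ∂μ) - ∫ x, K x ∂μ) / c := by
  have hint := integral_congr_ae h
  rw [integral_add hK' (hρ.const_mul c), integral_add hK (integrable_const c),
    integral_const_mul, integral_const, smul_eq_mul] at hint
  field_simp
  linarith

end MeasureTheory

theorem stmt7_general {M : Type*} [MeasurableSpace M] (μ : Measure M) [IsFiniteMeasure μ]
    (hμU : 0 < (μ Set.univ).toReal)
    (k : ℕ) (q : Fin k → M) (n : Fin k → ℕ) (g : ℕ)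
    (e2 τ : ℝ) (he : 0 < e2) (hτ : 0 < τ)
    (ρ K K' : M → ℝ)
    (hρpos : ∀ x, x ∉ Set.range q → 0 < ρ x)
    (hμq : μ (Set.range q) = 0)
    (hK : Integrable K μ) (hK' : Integrable K' μ) (hρint : Integrable ρ μ)
    (hGB : ∫ x, K x ∂μ = 2 * Real.pi * (2 - 2 * (g : ℝ)))
    (hGB' : ∫ x, K' x ∂μ = 2 * Real.pi * ((2 - 2 * (g : ℝ)) + ∑ j, (n j : ℝ)))
    (heq : ∀ x, x ∉ Set.range q → K' x + e2 * τ * ρ x = K x + e2 * τ) :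
    (∫ x, ρ x ∂μ)
        = (μ Set.univ).toReal - (2 * Real.pi / (e2 * τ)) * ∑ j, (n j : ℝ) ∧
    2 * Real.pi * ∑ j, (n j : ℝ) < e2 * τ * (μ Set.univ).toReal := by
  have heτ : 0 < e2 * τ := mul_pos he hτ
  have hoff : ∀ᵐ x ∂μ, x ∉ Set.range q := measure_eq_zero_iff_ae_notMem.1 hμq
  have hvol := integral_eq_measureReal_univ_sub_of_ae_add_mul_eq heτ.ne' hK hK' hρint
    (hoff.mono heq)
  rw [hGB, hGB', measureReal_def] at hvol
  have hvol' : ∫ x, ρ x ∂μ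
      = (μ Set.univ).toReal - (2 * Real.pi / (e2 * τ)) * ∑ j, (n j : ℝ) := by
    rw [hvol]; ring
  refine ⟨hvol', ?_⟩
  have : NeZero μ := ⟨fun hμ => by simp [hμ] at hμU⟩
  have hpos := integral_pos_of_ae_pos hρint (hoff.mono hρpos)
  rw [hvol, sub_pos, div_lt_iff₀ heτ] at hpos
  linarith

/-- Volume reduction for degenerate solutions of the curvature equation on a compact
surface.  Here μ is the volume measure of (M, ω); K and K' are the curvature densities
i F_ω/ω and (the smooth extension of) i F_{ω'}/ω; Gauss–Bonnet gives ∫K = 2π(2-2g) and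
∫K' = 2π(2-2g+Σnⱼ); ω' = ρ ω degenerates at the points qⱼ with multiplicities nⱼ.
Then Vol(M,ω') = Vol(M,ω) - (2π/(e²τ)) Σnⱼ, and in particular
2π Σnⱼ < e²τ Vol(M,ω). -/
theorem stmt7 {M : Type*} [MeasurableSpace M] (μ : Measure M) [IsFiniteMeasure μ]
    (hμU : 0 < (μ Set.univ).toReal)
    (k : ℕ) (q : Fin k → M) (n : Fin k → ℕ) (hn : ∀ j, 0 < n j) (g : ℕ)
    (e2 τ : ℝ) (he : 0 < e2) (hτ : 0 < τ)
    (ρ K K' : M → ℝ)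
    (hρ0 : ∀ x, 0 ≤ ρ x)
    (hρpos : ∀ x, x ∉ Set.range q → 0 < ρ x)
    (hμq : μ (Set.range q) = 0)
    (hK : Integrable K μ) (hK' : Integrable K' μ) (hρint : Integrable ρ μ)
    (hGB : ∫ x, K x ∂μ = 2 * Real.pi * (2 - 2 * (g : ℝ)))
    (hGB' : ∫ x, K' x ∂μ = 2 * Real.pi * ((2 - 2 * (g : ℝ)) + ∑ j, (n j : ℝ)))
    (heq : ∀ x, x ∉ Set.range q → K' x + e2 * τ * ρ x = K x + e2 * τ) :
    (∫ x, ρ x ∂μ)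
        = (μ Set.univ).toReal - (2 * Real.pi / (e2 * τ)) * ∑ j, (n j : ℝ) ∧
    2 * Real.pi * ∑ j, (n j : ℝ) < e2 * τ * (μ Set.univ).toReal :=
  stmt7_general μ hμU k q n g e2 τ he hτ ρ K K' hρpos hμq hK hK' hρint hGB hGB' heq
end
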